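/- arXiv:2404.07592 — 4 statements merged into one kernel-verified Lean document; each statement's English description precedes it below -/
import Mathlib

section
/- There are no positive, non-constant superharmonic functions on ℝ² (i.e., if u ∈ C²(ℝ²) satisfies u > 0 and Δu ≤ 0 everywhere, then u is constant). -/
open MeasureTheory Real
open scoped ENNReal

noncomputable def lap {N : ℕ} (f : EuclideanSpace ℝ (Fin N) → ℝ) (x : EuclideanSpace ℝ (Fin N)) : ℝ :=
  ∑ i, iteratedFDeriv ℝ 2 f x ![EuclideanSpace.single i 1, EuclideanSpace.single i 1]

noncomputable def Kab {N : ℕ} (α β : ℝ) (x : EuclideanSpace ℝ (Fin N)) : ℝ :=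
  ‖x‖ ^ (-α) * (Real.log (1 + ‖x‖)) ^ β

noncomputable def convK {N : ℕ} (α β : ℝ) (f : EuclideanSpace ℝ (Fin N) → ℝ)
    (x : EuclideanSpace ℝ (Fin N)) : ℝ :=
  ∫ y, Kab α β (x - y) * f y

noncomputable def convKL {N : ℕ} (α β : ℝ) (f : EuclideanSpace ℝ (Fin N) → ℝ)
    (x : EuclideanSpace ℝ (Fin N)) : ℝ≥0∞ :=
  ∫⁻ y, ENNReal.ofReal (Kab α β (x - y) * f y)

/-
Fix `x₀`, `y` and `c < u x₀`; by continuity `u ≥ c` on a small circle `‖z - x₀‖ = r₁`. For large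
`R` the function `c (log R - log ‖z - x₀‖) / (log R - log r₁)` is harmonic off `x₀`, equals `c` on
that circle and `0 < u` on the circle of radius `R`, so the minimum principle on the annulus bounds
`u y` from below by it; letting `R → ∞` gives `c ≤ u y`, hence `u x₀ ≤ u y`.

The minimum principle for `u - (a + b log ‖z - x₀‖)` comes from subtracting `ε ‖z - x₀‖²`: at an
interior minimum the second derivatives along both coordinate axes would be nonnegative, while
their sum is `Δu - 4ε < 0`, because `log ‖·‖` is harmonic in the plane.
-/

open Filter Topology Set
open scoped RealInnerProductSpace

def HasSecondDerivAt (g : ℝ → ℝ) (c t₀ : ℝ) : Prop :=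
  ∃ g' : ℝ → ℝ, (∀ᶠ t in 𝓝 t₀, HasDerivAt g (g' t) t) ∧ HasDerivAt g' c t₀

namespace HasSecondDerivAt

variable {g h : ℝ → ℝ} {c d t₀ : ℝ}

lemma sub (hg : HasSecondDerivAt g c t₀) (hh : HasSecondDerivAt h d t₀) :
    HasSecondDerivAt (fun t => g t - h t) (c - d) t₀ := by
  obtain ⟨g', hg, hg'⟩ := hg
  obtain ⟨h', hh, hh'⟩ := hh
  exact ⟨fun t => g' t - h' t,
    by filter_upwards [hg, hh] with t hgt hht using hgt.sub hht, hg'.sub hh'⟩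

lemma const_mul (a : ℝ) (hg : HasSecondDerivAt g c t₀) :
    HasSecondDerivAt (fun t => a * g t) (a * c) t₀ := by
  obtain ⟨g', hg, hg'⟩ := hg
  exact ⟨fun t => a * g' t, hg.mono fun t ht => ht.const_mul a, hg'.const_mul a⟩

lemma const_add (a : ℝ) (hg : HasSecondDerivAt g c t₀) :
    HasSecondDerivAt (fun t => a + g t) c t₀ := by
  obtain ⟨g', hg, hg'⟩ := hg
  exact ⟨g', hg.mono fun t ht => ht.const_add a, hg'⟩

end HasSecondDerivAt

lemma IsLocalMin.nonneg_of_hasSecondDerivAt {g : ℝ → ℝ} {c t₀ : ℝ} (hmin : IsLocalMin g t₀)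
    (hg : HasSecondDerivAt g c t₀) : 0 ≤ c := by
  obtain ⟨g', hg, hg'⟩ := hg
  by_contra! hc
  have hderiv : deriv g =ᶠ[𝓝 t₀] g' := hg.mono fun t ht => ht.deriv
  have hmax : IsLocalMax g t₀ :=
    isLocalMax_of_deriv_deriv_neg (by rwa [(hg'.congr_of_eventuallyEq hderiv).deriv])
      hmin.deriv_eq_zero hg.self_of_nhds.continuousAt
  have hconst : g =ᶠ[𝓝 t₀] fun _ => g t₀ := by
    filter_upwards [hmin, hmax] with t h₁ h₂ using le_antisymm h₂ h₁
  have hg'_zero : g' =ᶠ[𝓝 t₀] fun _ => 0 := by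
    filter_upwards [hg, hconst.eventuallyEq_nhds] with t ht hct
    exact ht.unique ((hasDerivAt_const t (g t₀)).congr_of_eventuallyEq hct)
  exact hc.ne (hg'.unique ((hasDerivAt_const t₀ 0).congr_of_eventuallyEq hg'_zero))

section NormedSpace

variable {E : Type*} [NormedAddCommGroup E] [NormedSpace ℝ E]

lemma hasDerivAt_add_smul (x w : E) (t : ℝ) : HasDerivAt (fun s : ℝ => x + s • w) w t := by
  simpa using ((hasDerivAt_id t).smul_const w).const_add x

lemma ContDiff.hasSecondDerivAt_comp_add_smul {u : E → ℝ} (hu : ContDiff ℝ 2 u) (x w : E) :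
    HasSecondDerivAt (fun t => u (x + t • w)) (iteratedFDeriv ℝ 2 u x ![w, w]) 0 := by
  refine ⟨fun t => fderiv ℝ u (x + t • w) w, Eventually.of_forall fun t => ?_, ?_⟩
  · exact ((hu.differentiable (by norm_num)) _).hasFDerivAt.comp_hasDerivAt t
      (hasDerivAt_add_smul x w t)
  · have hdu : DifferentiableAt ℝ (fderiv ℝ u) x :=
      (hu.fderiv_right (m := 1) le_rfl).differentiable one_ne_zero x
    have h := (hdu.hasFDerivAt.comp_hasDerivAt_of_eq 0 (hasDerivAt_add_smul x w 0)
      (by simp)).clm_apply (hasDerivAt_const 0 w)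
    simpa [iteratedFDeriv_two_apply] using h

end NormedSpace

section InnerProductSpace

variable {E : Type*} [NormedAddCommGroup E] [InnerProductSpace ℝ E]

lemma hasSecondDerivAt_norm_add_smul_sq (y w : E) :
    HasSecondDerivAt (fun t => ‖y + t • w‖ ^ 2) (2 * ‖w‖ ^ 2) 0 := by
  refine ⟨fun t => 2 * ⟪y + t • w, w⟫,
    Eventually.of_forall fun t => (hasDerivAt_add_smul y w t).norm_sq, ?_⟩
  simpa [real_inner_self_eq_norm_sq] using
    ((hasDerivAt_add_smul y w 0).inner ℝ (hasDerivAt_const 0 w)).const_mul 2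

lemma hasSecondDerivAt_log_norm_add_smul {y : E} (hy : y ≠ 0) (w : E) :
    HasSecondDerivAt (fun t => log ‖y + t • w‖)
      ((‖w‖ ^ 2 * ‖y‖ ^ 2 - 2 * ⟪y, w⟫ ^ 2) / ‖y‖ ^ 4) 0 := by
  have hsq : ∀ t, HasDerivAt (fun s => ‖y + s • w‖ ^ 2) (2 * ⟪y + t • w, w⟫) t :=
    fun t => (hasDerivAt_add_smul y w t).norm_sq
  have hne : ∀ᶠ t in 𝓝 (0 : ℝ), ‖y + t • w‖ ^ 2 ≠ 0 :=
    (hsq 0).continuousAt.eventually_ne (by simpa using hy : ‖y + (0 : ℝ) • w‖ ^ 2 ≠ 0)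
  have hlog : (fun t : ℝ => log ‖y + t • w‖) = fun t => log (‖y + t • w‖ ^ 2) / 2 := by
    ext t
    rw [Real.log_pow]
    ring
  refine ⟨fun t => ⟪y + t • w, w⟫ / ‖y + t • w‖ ^ 2, ?_, ?_⟩
  · filter_upwards [hne] with t ht
    rw [hlog]
    exact ((hsq t).log ht).div_const 2 |>.congr_deriv (by field_simp)
  · have hinner := (hasDerivAt_add_smul y w 0).inner ℝ (hasDerivAt_const (0 : ℝ) w)
    refine (hinner.fun_div (hsq 0) (by simpa using hy)).congr_deriv ?_
    simp only [zero_smul, add_zero, inner_zero_right, zero_add, real_inner_self_eq_norm_sq]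
    ring

end InnerProductSpace

lemma EuclideanSpace.sum_norm_single_sq_mul_sub_two_inner_single_sq {N : ℕ}
    (y : EuclideanSpace ℝ (Fin N)) :
    ∑ i, (‖EuclideanSpace.single i (1 : ℝ)‖ ^ 2 * ‖y‖ ^ 2
      - 2 * ⟪y, EuclideanSpace.single i 1⟫ ^ 2) = (N - 2) * ‖y‖ ^ 2 := by
  simp only [PiLp.norm_single, norm_one, one_pow, one_mul, inner_single_right, ringHom_apply,
    Finset.sum_sub_distrib, Finset.sum_const, Finset.card_univ, Fintype.card_fin, nsmul_eq_mul,
    ← Finset.mul_sum, ← real_norm_sq_eq]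
  ring

lemma tendsto_mul_sub_div_sub_atTop (c A B : ℝ) :
    Tendsto (fun L => c * (L - A) / (L - B)) atTop (𝓝 c) := by
  have h : Tendsto (fun L => c * (A - B) / (L - B)) atTop (𝓝 0) :=
    tendsto_const_nhds.div_atTop (tendsto_atTop_add_const_right _ _ tendsto_id)
  have h' : Tendsto (fun L => c - c * (A - B) / (L - B)) atTop (𝓝 c) := by
    simpa using (tendsto_const_nhds (x := c)).sub h
  refine h'.congr' ?_
  filter_upwards [eventually_gt_atTop B] with L hL
  field_simp [sub_ne_zero.mpr hL.ne']
  ring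

lemma IsCompact.exists_isMinOn_notMem_of_forall_not_isLocalMin {X α : Type*}
    [TopologicalSpace X] [LinearOrder α] [TopologicalSpace α] [OrderClosedTopology α]
    {K U : Set X} {v : X → α} (hK : IsCompact K) (hne : K.Nonempty) (hv : ContinuousOn v K)
    (hU : IsOpen U) (hUK : U ⊆ K) (hloc : ∀ z ∈ U, ¬ IsLocalMin v z) :
    ∃ z ∈ K, z ∉ U ∧ IsMinOn v K z := by
  obtain ⟨z, hzK, hmin⟩ := hK.exists_isMinOn hne hv
  exact ⟨z, hzK, fun hzU => hloc z hzU (hmin.isLocalMin (mem_of_superset (hU.mem_nhds hzU) hUK)),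
    hmin⟩

local notation "ℝ²" => EuclideanSpace ℝ (Fin 2)

section Superharmonic

variable {u : ℝ² → ℝ}

lemma not_isLocalMin_sub_log_norm_sub_sq (hu : ContDiff ℝ 2 u) (hsuper : ∀ x, lap u x ≤ 0)
    {x₀ z : ℝ²} (hz : z ≠ x₀) (a b : ℝ) {ε : ℝ} (hε : 0 < ε) :
    ¬ IsLocalMin (fun x => u x - (a + b * log ‖x - x₀‖) - ε * ‖x - x₀‖ ^ 2) z := by
  intro hmin
  set e : Fin 2 → ℝ² := fun i => EuclideanSpace.single i 1
  set y := z - x₀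
  have hy : y ≠ 0 := sub_ne_zero.mpr hz
  have hdir : ∀ i, 0 ≤ iteratedFDeriv ℝ 2 u z ![e i, e i]
      - b * ((‖e i‖ ^ 2 * ‖y‖ ^ 2 - 2 * ⟪y, e i⟫ ^ 2) / ‖y‖ ^ 4) - ε * (2 * ‖e i‖ ^ 2) := by
    intro i
    have hline : IsLocalMin (fun t : ℝ => u (z + t • e i) - (a + b * log ‖y + t • e i‖)
        - ε * ‖y + t • e i‖ ^ 2) 0 := by
      have hmin' : IsLocalMin (fun x => u x - (a + b * log ‖x - x₀‖) - ε * ‖x - x₀‖ ^ 2)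
          (z + (0 : ℝ) • e i) := by simpa using hmin
      have hcont : ContinuousAt (fun t : ℝ => z + t • e i) 0 := by fun_prop
      simpa [Function.comp_def, y, add_sub_right_comm] using
        IsLocalMin.comp_continuous (g := fun t : ℝ => z + t • e i) (b := 0) hmin' hcont
    exact hline.nonneg_of_hasSecondDerivAt <|
      ((hu.hasSecondDerivAt_comp_add_smul z (e i)).sub
        (((hasSecondDerivAt_log_norm_add_smul hy (e i)).const_mul b).const_add a)).sub
        ((hasSecondDerivAt_norm_add_smul_sq y (e i)).const_mul ε)
  have hsum := Finset.sum_nonneg (s := Finset.univ) fun i _ => hdir i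
  rw [Finset.sum_sub_distrib, Finset.sum_sub_distrib, ← Finset.mul_sum, ← Finset.sum_div,
    EuclideanSpace.sum_norm_single_sq_mul_sub_two_inner_single_sq, ← Finset.mul_sum] at hsum
  have hlap := hsuper z
  simp only [Fin.sum_univ_two, Nat.cast_ofNat, sub_self, zero_mul, zero_div, mul_zero, sub_zero,
    PiLp.norm_single, norm_one, one_pow, mul_one, Finset.sum_const, Finset.card_univ,
    Fintype.card_fin, nsmul_eq_mul, sub_nonneg, lap, e] at hsum hlap
  linarith

lemma log_norm_sub_le_of_le_on_spheres (hu : ContDiff ℝ 2 u) (hsuper : ∀ x, lap u x ≤ 0)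
    {x₀ : ℝ²} {r₁ r₂ a b : ℝ} (hr₁ : 0 < r₁)
    (h₁ : ∀ z, ‖z - x₀‖ = r₁ → a + b * log r₁ ≤ u z)
    (h₂ : ∀ z, ‖z - x₀‖ = r₂ → a + b * log r₂ ≤ u z)
    {y : ℝ²} (hy₁ : r₁ ≤ ‖y - x₀‖) (hy₂ : ‖y - x₀‖ ≤ r₂) :
    a + b * log ‖y - x₀‖ ≤ u y := by
  have hr₂ : 0 < r₂ := hr₁.trans_le (hy₁.trans hy₂)
  have hdist : Continuous fun x : ℝ² => ‖x - x₀‖ := by fun_prop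
  set K := (fun x : ℝ² => ‖x - x₀‖) ⁻¹' Icc r₁ r₂
  have hK : IsCompact K :=
    (isCompact_closedBall x₀ r₂).of_isClosed_subset (isClosed_Icc.preimage hdist)
      fun x hx => mem_closedBall_iff_norm.mpr hx.2
  have hyK : y ∈ K := ⟨hy₁, hy₂⟩
  suffices h : ∀ ε > 0, a + b * log ‖y - x₀‖ ≤ u y + ε * r₂ ^ 2 by
    refine le_of_forall_pos_le_add fun δ hδ => ?_
    have := h (δ / r₂ ^ 2) (by positivity)
    rwa [div_mul_cancel₀ δ (by positivity)] at this
  intro ε hε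
  set v := fun x : ℝ² => u x - (a + b * log ‖x - x₀‖) - ε * ‖x - x₀‖ ^ 2
  have hv : ContinuousOn v K := by
    refine ContinuousOn.sub (hu.continuous.continuousOn.sub ?_) (by fun_prop)
    exact continuousOn_const.add <| continuousOn_const.mul <|
      hdist.continuousOn.log fun x hx => (hr₁.trans_le hx.1).ne'
  obtain ⟨z, hzK, hzU, hmin⟩ :=
    hK.exists_isMinOn_notMem_of_forall_not_isLocalMin ⟨y, hyK⟩ hv
      (isOpen_Ioo.preimage hdist) (fun x hx => Ioo_subset_Icc_self hx)
      fun x hx => not_isLocalMin_sub_log_norm_sub_sq hu hsuper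
        (sub_ne_zero.mp (norm_pos_iff.mp (hr₁.trans hx.1))) a b hε
  have hvz : -(ε * r₂ ^ 2) ≤ v z := by
    have hz : ‖z - x₀‖ = r₁ ∨ ‖z - x₀‖ = r₂ := by
      by_contra! h
      exact hzU ⟨hzK.1.lt_of_ne h.1.symm, hzK.2.lt_of_ne h.2⟩
    have hsq : ‖z - x₀‖ ^ 2 ≤ r₂ ^ 2 := pow_le_pow_left₀ (norm_nonneg _) hzK.2 2
    rcases hz with hz | hz
    · have := h₁ z hz
      simp only [v, hz] at hsq ⊢
      nlinarith
    · have := h₂ z hz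
      simp only [v, hz] at hsq ⊢
      nlinarith
  have hvy : v z ≤ v y := hmin hyK
  simp only [v] at hvy
  nlinarith [sq_nonneg ‖y - x₀‖]


lemma mul_log_div_le_of_le_on_sphere (hu : ContDiff ℝ 2 u) (hpos : ∀ x, 0 < u x)
    (hsuper : ∀ x, lap u x ≤ 0) {x₀ y : ℝ²} {r₁ R c : ℝ} (hr₁ : 0 < r₁) (hr₁R : r₁ < R)
    (hc : ∀ z, ‖z - x₀‖ = r₁ → c ≤ u z) (hy₁ : r₁ ≤ ‖y - x₀‖) (hy₂ : ‖y - x₀‖ ≤ R) :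
    c * (log R - log ‖y - x₀‖) / (log R - log r₁) ≤ u y := by
  have hD : log R - log r₁ ≠ 0 := (sub_pos.mpr (log_lt_log hr₁ hr₁R)).ne'
  have key := log_norm_sub_le_of_le_on_spheres hu hsuper (a := c * log R / (log R - log r₁))
    (b := -c / (log R - log r₁)) hr₁ (r₂ := R) (fun z hz => ?_) (fun z hz => ?_) hy₁ hy₂
  · exact le_of_eq_of_le (by field_simp; ring) key
  · exact le_of_eq_of_le (by field_simp; ring) (hc z hz)
  · exact le_of_eq_of_le (by ring) (hpos z).le

lemma le_of_pos_of_lap_nonpos (hu : ContDiff ℝ 2 u) (hpos : ∀ x, 0 < u x)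
    (hsuper : ∀ x, lap u x ≤ 0) (x₀ y : ℝ²) : u x₀ ≤ u y := by
  rcases eq_or_ne y x₀ with rfl | hne
  · rfl
  set r := ‖y - x₀‖
  have hr : 0 < r := norm_pos_iff.mpr (sub_ne_zero.mpr hne)
  refine le_of_forall_lt_imp_le_of_dense fun c hc => ?_
  obtain ⟨δ, hδ, hball⟩ :=
    Metric.eventually_nhds_iff.mp (hu.continuous.continuousAt.eventually (lt_mem_nhds hc))
  set r₁ := min (δ / 2) r
  have hr₁ : 0 < r₁ := lt_min (half_pos hδ) hr
  have hc₁ : ∀ z, ‖z - x₀‖ = r₁ → c ≤ u z := fun z hz =>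
    (hball (by rw [dist_eq_norm, hz]; exact (min_le_left _ _).trans_lt (half_lt_self hδ))).le
  have hbound : ∀ᶠ L in atTop, c * (L - log r) / (L - log r₁) ≤ u y := by
    filter_upwards [eventually_gt_atTop (log r)] with L hL
    have hR : r < exp L := (log_lt_iff_lt_exp hr).mp hL
    simpa only [log_exp] using mul_log_div_le_of_le_on_sphere hu hpos hsuper hr₁
      ((min_le_right _ _).trans_lt hR) hc₁ (min_le_right _ _) hR.le
  exact le_of_tendsto (tendsto_mul_sub_div_sub_atTop c _ _) hbound

end Superharmonic

theorem stmt0 (u : EuclideanSpace ℝ (Fin 2) → ℝ) (hu : ContDiff ℝ 2 u)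
    (hpos : ∀ x, 0 < u x) (hsuper : ∀ x, lap u x ≤ 0) :
    ∀ x y, u x = u y := fun x y =>
  le_antisymm (le_of_pos_of_lap_nonpos hu hpos hsuper x y)
    (le_of_pos_of_lap_nonpos hu hpos hsuper y x)
end

section
/- Let K_{α,β}(x) = |x|^{-α} log^{β}(1+|x|) with 0 ≤ α ≤ N and β > α − N. If f ∈ L¹_loc(ℝᴺ) is nonnegative with ∫_{B_{1/2}} f > 0, then there is C > 0 such that (K_{α,β} * f)(x) ≥ C |x|^{-α} log^{β}(1+|x|) for all |x| ≥ 1. -/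
open MeasureTheory Real
open scoped ENNReal

/-!
For `‖y‖ < 1/2 ≤ ‖x‖ / 2` the distance `‖x - y‖` lies between `‖x‖ / 2` and `2 ‖x‖`, and then
`log (1 + ‖x - y‖)` lies between half and twice `log (1 + ‖x‖)`. Any real power of quantities
comparable up to a factor `2` is comparable up to `2 ^ |γ|`, so `K (x - y) ≥ c K x` on the ball
`B_{1/2}`, and integrating `f` over that ball alone gives the bound with `C = c ∫_{B_{1/2}} f`.
-/

lemma two_rpow_neg_abs_mul_rpow_le {a b : ℝ} (ha : 0 < a) (hab : a / 2 ≤ b) (hba : b ≤ 2 * a)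
    (γ : ℝ) : 2 ^ (-|γ|) * a ^ γ ≤ b ^ γ := by
  rcases le_or_gt 0 γ with hγ | hγ
  · calc 2 ^ (-|γ|) * a ^ γ = (a / 2) ^ γ := by
          rw [abs_of_nonneg hγ, div_rpow ha.le zero_le_two, rpow_neg zero_le_two, div_eq_inv_mul]
      _ ≤ b ^ γ := rpow_le_rpow (by positivity) hab hγ
  · calc 2 ^ (-|γ|) * a ^ γ = (2 * a) ^ γ := by
          rw [abs_of_neg hγ, neg_neg, mul_rpow zero_le_two ha.le]
      _ ≤ b ^ γ := rpow_le_rpow_of_nonpos (by linarith) hba hγ.le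

lemma log_one_add_div_two_le {s t : ℝ} (hs : 0 ≤ s) (ht : 0 ≤ t) (hst : s ≤ 2 * t) :
    log (1 + s) / 2 ≤ log (1 + t) := by
  have hsq : 1 + s ≤ (1 + t) ^ 2 := by nlinarith
  have := log_le_log (by linarith) hsq
  rw [log_pow, Nat.cast_ofNat] at this
  linarith

lemma Kab_nonneg {N : ℕ} (α β : ℝ) (x : EuclideanSpace ℝ (Fin N)) : 0 ≤ Kab α β x :=
  mul_nonneg (rpow_nonneg (norm_nonneg x) _)
    (rpow_nonneg (log_nonneg (le_add_of_nonneg_right (norm_nonneg x))) _)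

lemma two_rpow_mul_Kab_le_Kab_sub {N : ℕ} (α β : ℝ) {x y : EuclideanSpace ℝ (Fin N)}
    (hx : x ≠ 0) (hy : 2 * ‖y‖ ≤ ‖x‖) :
    2 ^ (-|α|) * 2 ^ (-|β|) * Kab α β x ≤ Kab α β (x - y) := by
  have hx₀ : 0 < ‖x‖ := norm_pos_iff.mpr hx
  have hlower : ‖x‖ / 2 ≤ ‖x - y‖ := by linarith [norm_sub_norm_le x y]
  have hupper : ‖x - y‖ ≤ 2 * ‖x‖ := by linarith [norm_sub_le x y, norm_nonneg y]
  have hlog₀ : 0 < log (1 + ‖x‖) := log_pos (by linarith)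
  have hlogLower := log_one_add_div_two_le hx₀.le (norm_nonneg (x - y)) (by linarith)
  have hlogUpper := log_one_add_div_two_le (norm_nonneg (x - y)) hx₀.le hupper
  have hpow := two_rpow_neg_abs_mul_rpow_le hx₀ hlower hupper (-α)
  have hlog := two_rpow_neg_abs_mul_rpow_le hlog₀ hlogLower (by linarith) β
  rw [abs_neg] at hpow
  calc 2 ^ (-|α|) * 2 ^ (-|β|) * Kab α β x
      = (2 ^ (-|α|) * ‖x‖ ^ (-α)) * (2 ^ (-|β|) * log (1 + ‖x‖) ^ β) := by
        unfold Kab; ring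
    _ ≤ ‖x - y‖ ^ (-α) * log (1 + ‖x - y‖) ^ β :=
        mul_le_mul hpow hlog (by positivity) (by positivity)
    _ = Kab α β (x - y) := rfl

theorem stmt2_general (N : ℕ) (α β : ℝ) (f : EuclideanSpace ℝ (Fin N) → ℝ)
    (hf0 : ∀ x, 0 ≤ f x)
    (hfpos : 0 < ∫ x in Metric.ball (0 : EuclideanSpace ℝ (Fin N)) (1/2), f x) :
    ∃ C > 0, ∀ x : EuclideanSpace ℝ (Fin N), 1 ≤ ‖x‖ →
      ENNReal.ofReal (C * (‖x‖ ^ (-α) * (Real.log (1 + ‖x‖)) ^ β)) ≤ convKL α β f x := by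
  set B := Metric.ball (0 : EuclideanSpace ℝ (Fin N)) (1/2)
  set c : ℝ := 2 ^ (-|α|) * 2 ^ (-|β|)
  have hfB : ENNReal.ofReal (∫ y in B, f y) = ∫⁻ y in B, ENNReal.ofReal (f y) :=
    ofReal_integral_eq_lintegral_ofReal (Integrable.of_integral_ne_zero hfpos.ne')
      (ae_of_all _ fun y => hf0 y)
  refine ⟨c * ∫ y in B, f y, by positivity, fun x hx => ?_⟩
  have hx₀ : x ≠ 0 := norm_pos_iff.mp (by linarith)
  calc ENNReal.ofReal (c * (∫ y in B, f y) * Kab α β x)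
      = ∫⁻ y in B, ENNReal.ofReal (c * Kab α β x) * ENNReal.ofReal (f y) := by
        rw [lintegral_const_mul' _ _ ENNReal.ofReal_ne_top, ← hfB,
          ← ENNReal.ofReal_mul (by have := Kab_nonneg α β x; positivity), mul_right_comm]
    _ ≤ ∫⁻ y in B, ENNReal.ofReal (Kab α β (x - y) * f y) := by
        refine setLIntegral_mono' measurableSet_ball fun y hy => ?_
        rw [← ENNReal.ofReal_mul (by have := Kab_nonneg α β x; positivity)]
        have hy : 2 * ‖y‖ ≤ ‖x‖ := by
          rw [Metric.mem_ball, dist_zero_right] at hy; linarith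
        exact ENNReal.ofReal_le_ofReal <|
          mul_le_mul_of_nonneg_right (two_rpow_mul_Kab_le_Kab_sub α β hx₀ hy) (hf0 y)
    _ ≤ convKL α β f x := setLIntegral_le_lintegral _ _

theorem stmt2 (N : ℕ) (hN : 1 ≤ N) (α β : ℝ) (hα0 : 0 ≤ α) (hαN : α ≤ N)
    (hβ : α - N < β) (f : EuclideanSpace ℝ (Fin N) → ℝ)
    (hf : LocallyIntegrable f volume) (hf0 : ∀ x, 0 ≤ f x)
    (hfpos : 0 < ∫ x in Metric.ball (0 : EuclideanSpace ℝ (Fin N)) (1/2), f x) :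
    ∃ C > 0, ∀ x : EuclideanSpace ℝ (Fin N), 1 ≤ ‖x‖ →
      ENNReal.ofReal (C * (‖x‖ ^ (-α) * (Real.log (1 + ‖x‖)) ^ β)) ≤ convKL α β f x :=
  stmt2_general N α β f hf0 hfpos
end

section
/- Let K_{α,β}(x) = |x|^{-α} log^{β}(1+|x|) with 0 ≤ α ≤ N, β > α − N, and let f ≥ 0 satisfy f(x) ≥ c|x|^{-σ} log^{κ}(1+|x|) for |x| ≥ 1 with c > 0, σ ≥ 0, κ ∈ ℝ. If N − α − σ > 0, or if N − α − σ = 0 and 1 + β + κ ≥ 0, then (K_{α,β} * f)(x) = +∞ for every x with |x| ≥ 1. -/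
open MeasureTheory Real
open scoped ENNReal

open Set Function Filter Metric Module

/-!
For `‖x‖ ≤ 2^(j-1)` and `y` in the dyadic annulus `2^j ≤ ‖y‖ < 2^(j+1)`, both `‖y‖` and `‖x - y‖`
lie in `[2^(j-1), 2^(j+2)]`, where `t^(-a) log^p (1 + t)` is comparable to `2^(-j a) j^p`.
Hence the integrand `K_{α,β}(x - y) f(y)` is at least a constant times `2^(-j(α+σ)) j^(β+κ)` on
that annulus, whose volume is of order `2^(jN)`. The integral therefore dominates a constant times
`∑ⱼ 2^(j(N-α-σ)) j^(β+κ)`, which diverges: its terms blow up when `N - α - σ > 0`, and it dominates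
the harmonic series when `N - α - σ = 0` and `β + κ ≥ -1`.
-/

lemma rpow_neg_abs_mul_rpow_le_rpow {a A L t : ℝ} (ha : 1 ≤ a) (hA : 0 < A) (hAL : A ≤ L)
    (hLA : L ≤ a * A) : a ^ (-|t|) * A ^ t ≤ L ^ t := by
  rcases le_or_gt 0 t with ht | ht
  · rw [abs_of_nonneg ht]
    calc a ^ (-t) * A ^ t ≤ 1 * A ^ t := by
          gcongr
          exact rpow_le_one_of_one_le_of_nonpos ha (neg_nonpos.2 ht)
      _ ≤ L ^ t := by rw [one_mul]; exact rpow_le_rpow hA.le hAL ht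
  · rw [abs_of_neg ht, neg_neg, ← mul_rpow (by linarith) hA.le]
    exact rpow_le_rpow_of_nonpos (hA.trans_le hAL) hLA ht.le

lemma exists_pos_mul_le_rpow_neg_mul_log_rpow {a : ℝ} (ha : 0 ≤ a) (p : ℝ) :
    ∃ C > 0, ∀ j : ℕ, 1 ≤ j → ∀ t : ℝ, 2 ^ j ≤ 2 * t → t ≤ 4 * 2 ^ j →
      C * (2 ^ (-(j * a)) * (j : ℝ) ^ p) ≤ t ^ (-a) * log (1 + t) ^ p := by
  refine ⟨4 ^ (-a) * (8 ^ (-|p|) * (log 2 / 2) ^ p), by positivity, fun j hj t hjt htj ↦ ?_⟩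
  have h2j : (0 : ℝ) < 2 ^ j := by positivity
  have ht : 0 < t := by linarith
  have hpow : (4 * 2 ^ j : ℝ) ^ (-a) = 4 ^ (-a) * 2 ^ (-(j * a)) := by
    rw [mul_rpow (by norm_num) h2j.le, ← rpow_natCast, ← rpow_mul zero_le_two, mul_neg]
  have hrpow : 4 ^ (-a) * 2 ^ (-(j * a)) ≤ t ^ (-a) := by
    rw [← hpow]; exact rpow_le_rpow_of_nonpos ht htj (neg_nonpos.2 ha)
  have hlog_lower : j * log 2 / 2 ≤ log (1 + t) := by
    have : log (2 ^ j) ≤ log ((1 + t) ^ 2) := log_le_log (by positivity) (by nlinarith)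
    rw [log_pow, log_pow] at this
    push_cast at this
    linarith
  have hlog_upper : log (1 + t) ≤ 8 * (j * log 2 / 2) := by
    have h8 : (2 : ℝ) ^ (j + 3) ≤ 2 ^ (4 * j) := pow_le_pow_right₀ one_le_two (by omega)
    have : log (1 + t) ≤ log (2 ^ (4 * j)) := by
      refine log_le_log (by linarith) ?_
      rw [pow_add] at h8
      linarith [one_le_pow₀ (M₀ := ℝ) one_le_two (n := j)]
    rw [log_pow] at this
    push_cast at this
    linarith
  have hlog := rpow_neg_abs_mul_rpow_le_rpow (t := p) (by norm_num) (by positivity) hlog_lower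
    hlog_upper
  rw [mul_div_assoc, mul_rpow (by positivity) (by positivity)] at hlog
  calc 4 ^ (-a) * (8 ^ (-|p|) * (log 2 / 2) ^ p) * (2 ^ (-(j * a)) * (j : ℝ) ^ p)
      = (4 ^ (-a) * 2 ^ (-(j * a))) * (8 ^ (-|p|) * ((j : ℝ) ^ p * (log 2 / 2) ^ p)) := by ring
    _ ≤ t ^ (-a) * log (1 + t) ^ p := by gcongr

section DyadicAnnulus

variable {E : Type*} [NormedAddCommGroup E]

def dyadicAnnulus (j : ℕ) : Set E := (‖·‖) ⁻¹' Ico (2 ^ j) (2 ^ (j + 1))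

lemma measurableSet_dyadicAnnulus [MeasurableSpace E] [OpensMeasurableSpace E] (j : ℕ) :
    MeasurableSet (dyadicAnnulus (E := E) j) :=
  measurable_norm measurableSet_Ico

lemma pairwise_disjoint_dyadicAnnulus : Pairwise (Disjoint on dyadicAnnulus (E := E)) :=
  fun _ _ hij ↦ ((pow_right_mono₀ one_le_two).pairwise_disjoint_on_Ico_succ hij).preimage _

lemma dyadicAnnulus_eq_ball_diff_ball (j : ℕ) :
    dyadicAnnulus (E := E) j = ball 0 (2 ^ (j + 1)) \ ball 0 (2 ^ j) := by
  ext y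
  simp [dyadicAnnulus, and_comm]

lemma ofReal_mul_addHaar_ball_le_addHaar_dyadicAnnulus [NormedSpace ℝ E] [MeasurableSpace E]
    [BorelSpace E] [FiniteDimensional ℝ E] [Nontrivial E] (μ : Measure E) [μ.IsAddHaarMeasure]
    (j : ℕ) :
    ENNReal.ofReal ((2 ^ j) ^ finrank ℝ E) * μ (ball 0 1) ≤ μ (dyadicAnnulus j) := by
  have hd : 1 ≤ finrank ℝ E := Module.finrank_pos
  set r : ℝ := (2 ^ j) ^ finrank ℝ E
  have hr : 0 ≤ r := by positivity
  have hdouble : 2 * r ≤ (2 ^ (j + 1)) ^ finrank ℝ E := by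
    rw [pow_succ, mul_pow, mul_comm]
    gcongr
    calc (2 : ℝ) = 2 ^ 1 := (pow_one 2).symm
      _ ≤ 2 ^ finrank ℝ E := pow_le_pow_right₀ one_le_two hd
  rw [dyadicAnnulus_eq_ball_diff_ball, measure_sdiff (ball_subset_ball (by gcongr <;> simp))
      measurableSet_ball.nullMeasurableSet measure_ball_lt_top.ne,
    Measure.addHaar_ball μ 0 (r := 2 ^ (j + 1)) (by positivity),
    Measure.addHaar_ball μ 0 (r := 2 ^ j) (by positivity),
    ← ENNReal.sub_mul fun _ _ ↦ measure_ball_lt_top.ne, ← ENNReal.ofReal_sub _ hr]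
  gcongr
  linarith

end DyadicAnnulus

lemma tsum_mul_measure_le_lintegral {α ι : Type*} [MeasurableSpace α] [Countable ι]
    {μ : Measure α} {s : ι → Set α} (hs : ∀ i, MeasurableSet (s i))
    (hd : Pairwise (Disjoint on s)) {m : ι → ℝ≥0∞} {g : α → ℝ≥0∞}
    (hm : ∀ i, ∀ x ∈ s i, m i ≤ g x) :
    ∑' i, m i * μ (s i) ≤ ∫⁻ x, g x ∂μ :=
  calc ∑' i, m i * μ (s i) = ∑' i, ∫⁻ _ in s i, m i ∂μ := by simp only [setLIntegral_const]
    _ ≤ ∑' i, ∫⁻ x in s i, g x ∂μ := ENNReal.tsum_le_tsum fun i ↦ setLIntegral_mono' (hs i) (hm i)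
    _ = ∫⁻ x in ⋃ i, s i, g x ∂μ := (lintegral_iUnion hs hd g).symm
    _ ≤ ∫⁻ x, g x ∂μ := setLIntegral_le_lintegral _ _

lemma tsum_ofReal_eq_top_of_not_summable {ι : Type*} {f : ι → ℝ} (hf0 : ∀ i, 0 ≤ f i)
    (hf : ¬Summable f) : ∑' i, ENNReal.ofReal (f i) = ⊤ :=
  ENNReal.tsum_coe_eq_top_iff_not_summable_coe.2 <| by
    simpa only [Real.coe_toNNReal _ (hf0 _)] using hf

lemma not_summable_two_rpow_mul_rpow {δ q : ℝ} (h : 0 < δ ∨ δ = 0 ∧ -1 ≤ q) :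
    ¬Summable fun j : ℕ ↦ (2 : ℝ) ^ ((j : ℝ) * δ) * (j : ℝ) ^ q := by
  rcases h with hδ | ⟨rfl, hq⟩
  · have hexp := (tendsto_exp_mul_div_rpow_atTop (-q) (log 2 * δ) (by positivity)).comp
      tendsto_natCast_atTop_atTop
    refine fun hs ↦ not_tendsto_nhds_of_tendsto_atTop (hexp.congr' ?_) 0 hs.tendsto_atTop_zero
    filter_upwards [eventually_ge_atTop 1] with j hj
    rw [Function.comp_apply, rpow_neg (Nat.cast_nonneg j), div_inv_eq_mul,
      rpow_def_of_pos two_pos, mul_right_comm, mul_assoc]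
  · refine fun hs ↦ Real.not_summable_natCast_inv (hs.of_nonneg_of_le (fun _ ↦ by positivity) ?_)
    intro j
    rw [mul_zero, rpow_zero, one_mul]
    rcases Nat.eq_zero_or_pos j with rfl | hj
    · simp only [CharP.cast_eq_zero, inv_zero]; positivity
    · rw [← rpow_neg_one]
      exact rpow_le_rpow_of_exponent_le (by exact_mod_cast hj) hq

lemma lintegral_eq_top_of_le_on_dyadicAnnulus {E : Type*} [NormedAddCommGroup E]
    [NormedSpace ℝ E] [MeasurableSpace E] [BorelSpace E] [FiniteDimensional ℝ E] [Nontrivial E]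
    (μ : Measure E) [μ.IsAddHaarMeasure] {g : E → ℝ≥0∞} {C b q : ℝ} (hC : 0 < C) (j₀ : ℕ)
    (hg : ∀ j, j₀ ≤ j → ∀ y ∈ dyadicAnnulus j,
      ENNReal.ofReal (C * (2 ^ (-(j * b)) * (j : ℝ) ^ q)) ≤ g y)
    (hbq : 0 < finrank ℝ E - b ∨ finrank ℝ E - b = 0 ∧ -1 ≤ q) :
    ∫⁻ y, g y ∂μ = ⊤ := by
  set d := finrank ℝ E
  set a : ℕ → ℝ := fun j ↦ C * ((2 : ℝ) ^ ((j : ℝ) * (d - b)) * (j : ℝ) ^ q)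
  have ha : ∀ j : ℕ, C * (2 ^ (-(j * b)) * (j : ℝ) ^ q) * (2 ^ j) ^ d = a j := by
    intro j
    simp only [a]
    rw [← pow_mul, ← rpow_natCast, Nat.cast_mul, mul_sub, rpow_sub two_pos, rpow_neg zero_le_two]
    ring
  have hdiv : ¬Summable fun k ↦ a (k + j₀) := by
    rw [summable_nat_add_iff (f := a) j₀]
    exact fun hs ↦ not_summable_two_rpow_mul_rpow hbq ((hs.mul_left C⁻¹).congr fun j ↦ by
      simp only [a, inv_mul_cancel_left₀ hC.ne'])
  have hsum : ∑' k, ENNReal.ofReal (a (k + j₀)) * μ (ball 0 1) ≤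
      ∑' k, ENNReal.ofReal (C * (2 ^ (-((k + j₀ : ℕ) * b)) * ((k + j₀ : ℕ) : ℝ) ^ q)) *
        μ (dyadicAnnulus (k + j₀)) := by
    refine ENNReal.tsum_le_tsum fun k ↦ ?_
    rw [← ha, ENNReal.ofReal_mul (by positivity), mul_assoc]
    gcongr
    exact ofReal_mul_addHaar_ball_le_addHaar_dyadicAnnulus μ _
  rw [ENNReal.tsum_mul_right, tsum_ofReal_eq_top_of_not_summable (fun _ ↦ by positivity) hdiv,
    ENNReal.top_mul (measure_ball_pos μ 0 one_pos).ne'] at hsum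
  exact top_le_iff.1 <| hsum.trans <| tsum_mul_measure_le_lintegral
    (fun k ↦ measurableSet_dyadicAnnulus _)
    (pairwise_disjoint_dyadicAnnulus.comp_of_injective (add_left_injective j₀))
    fun k ↦ hg (k + j₀) (Nat.le_add_left _ _)

lemma exists_pos_mul_le_Kab_mul_on_dyadicAnnulus {N : ℕ} {α β σ κ c : ℝ} (hα : 0 ≤ α)
    (hσ : 0 ≤ σ) (hc : 0 < c) {f : EuclideanSpace ℝ (Fin N) → ℝ}
    (hlow : ∀ y : EuclideanSpace ℝ (Fin N), 1 ≤ ‖y‖ →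
      c * (‖y‖ ^ (-σ) * log (1 + ‖y‖) ^ κ) ≤ f y) :
    ∃ C > 0, ∀ x : EuclideanSpace ℝ (Fin N), ∀ j : ℕ, 1 ≤ j → 2 * ‖x‖ ≤ 2 ^ j →
      ∀ y ∈ dyadicAnnulus j, C * (2 ^ (-(j * (α + σ))) * (j : ℝ) ^ (β + κ)) ≤
        Kab α β (x - y) * f y := by
  obtain ⟨CK, hCK, hK⟩ := exists_pos_mul_le_rpow_neg_mul_log_rpow hα β
  obtain ⟨Cf, hCf, hf⟩ := exists_pos_mul_le_rpow_neg_mul_log_rpow hσ κ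
  refine ⟨CK * (c * Cf), by positivity, fun x j hj hx y ⟨hy₁, hy₂⟩ ↦ ?_⟩
  have h2j : (2 : ℝ) ^ (j + 1) = 2 * 2 ^ j := pow_succ' 2 j
  have hxy₁ : 2 ^ j ≤ 2 * ‖x - y‖ := by linarith [norm_sub_norm_le y x, norm_sub_rev x y]
  have hxy₂ : ‖x - y‖ ≤ 4 * 2 ^ j := by linarith [norm_sub_le x y]
  have hKxy := hK j hj _ hxy₁ hxy₂
  have hfy := (mul_le_mul_of_nonneg_left (hf j hj _ (by linarith) (by linarith)) hc.le).trans
    (hlow y ((one_le_pow₀ one_le_two).trans hy₁))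
  have hKab : 0 ≤ Kab α β (x - y) :=
    mul_nonneg (rpow_nonneg (norm_nonneg _) _)
      (rpow_nonneg (log_nonneg (le_add_of_nonneg_right (norm_nonneg _))) _)
  calc CK * (c * Cf) * (2 ^ (-(j * (α + σ))) * (j : ℝ) ^ (β + κ))
      = CK * (2 ^ (-(j * α)) * (j : ℝ) ^ β) * (c * (Cf * (2 ^ (-(j * σ)) * (j : ℝ) ^ κ))) := by
        rw [mul_add, neg_add, rpow_add two_pos, rpow_add (Nat.cast_pos.2 hj)]
        ring
    _ ≤ Kab α β (x - y) * f y := mul_le_mul hKxy hfy (by positivity) hKab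

theorem stmt4_general (N : ℕ) (hN : 1 ≤ N) (α β σ κ c : ℝ) (hα0 : 0 ≤ α)
    (hσ : 0 ≤ σ) (hc : 0 < c)
    (f : EuclideanSpace ℝ (Fin N) → ℝ)
    (hlow : ∀ x : EuclideanSpace ℝ (Fin N), 1 ≤ ‖x‖ →
      c * (‖x‖ ^ (-σ) * (Real.log (1 + ‖x‖)) ^ κ) ≤ f x)
    (hcase : 0 < (N : ℝ) - α - σ ∨ ((N : ℝ) - α - σ = 0 ∧ 0 ≤ 1 + β + κ)) :
    ∀ x : EuclideanSpace ℝ (Fin N), 1 ≤ ‖x‖ → convKL α β f x = ⊤ := by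
  intro x _
  have : Nonempty (Fin N) := ⟨⟨0, hN⟩⟩
  obtain ⟨C, hC, hbound⟩ := exists_pos_mul_le_Kab_mul_on_dyadicAnnulus hα0 hσ hc hlow
  obtain ⟨j₀, hj₀⟩ := pow_unbounded_of_one_lt (2 * ‖x‖) one_lt_two
  refine lintegral_eq_top_of_le_on_dyadicAnnulus volume hC (j₀ + 1)
    (fun j hj y hy ↦ ENNReal.ofReal_le_ofReal <| hbound x j (by omega)
      (hj₀.le.trans (pow_le_pow_right₀ one_le_two (by omega))) y hy) ?_
  rw [finrank_euclideanSpace_fin, ← sub_sub]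
  rcases hcase with h | ⟨h, hq⟩
  · exact Or.inl h
  · exact Or.inr ⟨h, by linarith⟩

theorem stmt4 (N : ℕ) (hN : 1 ≤ N) (α β σ κ c : ℝ) (hα0 : 0 ≤ α) (hαN : α ≤ N)
    (hβ : α - N < β) (hσ : 0 ≤ σ) (hc : 0 < c)
    (f : EuclideanSpace ℝ (Fin N) → ℝ)
    (hf : LocallyIntegrable f volume) (hf0 : ∀ x, 0 ≤ f x)
    (hlow : ∀ x : EuclideanSpace ℝ (Fin N), 1 ≤ ‖x‖ →
      c * (‖x‖ ^ (-σ) * (Real.log (1 + ‖x‖)) ^ κ) ≤ f x)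
    (hcase : 0 < (N : ℝ) - α - σ ∨ ((N : ℝ) - α - σ = 0 ∧ 0 ≤ 1 + β + κ)) :
    ∀ x : EuclideanSpace ℝ (Fin N), 1 ≤ ‖x‖ → convKL α β f x = ⊤ :=
  stmt4_general N hN α β σ κ c hα0 hσ hc f hlow hcase
end

section
/- Let N ≥ 3, w(x) = (A + |x|²)^{1/2} with A > e, and v(x) = w(x)^{-γ} log^{τ} w(x) with 2 < γ ≤ N and −1 < τ < 1. Then there exists λ* > 0 (depending on N, A, γ, τ) such that for all λ > λ*, −Δv + (λ/2) v ≥ 0 pointwise in ℝᴺ. -/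
/-!
The function `v` is radial: `v x = g ‖x‖²` with `g s = √(A + s) ^ (-γ) * L s ^ τ` and
`L s = log √(A + s)`, so `Δv = 2 N g'(s) + 4 s g''(s)` at `s = ‖x‖²`. The logarithmic
derivative of `g` is `(τ / L - γ) / (2 (A + s))`, so `g'` and `s g''` are `g` times rational
expressions in `1 / L` and `s / (A + s)`. Since `A > e` forces `L ≥ 1/2`, these are bounded,
so `Δv ≤ K v` for a constant `K` and every `λ > 2 K` works.
-/

open MeasureTheory Real
open scoped ENNReal

open scoped RealInnerProductSpace

section Radial

variable {E : Type*} [NormedAddCommGroup E] [InnerProductSpace ℝ E]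
  {g g' : ℝ → ℝ} {g'' : ℝ}

theorem iteratedFDeriv_two_comp_norm_sq (hg : ∀ s, 0 ≤ s → HasDerivAt g (g' s) s) (x : E)
    (hg' : HasDerivAt g' g'' (‖x‖ ^ 2)) (u v : E) :
    iteratedFDeriv ℝ 2 (fun z => g (‖z‖ ^ 2)) x ![u, v]
      = 2 * g' (‖x‖ ^ 2) * ⟪u, v⟫ + 4 * g'' * ⟪x, u⟫ * ⟪x, v⟫ := by
  have hD : fderiv ℝ (fun z => g (‖z‖ ^ 2)) = fun y : E => g' (‖y‖ ^ 2) • (2 • innerSL ℝ y) :=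
    funext fun (y : E) => ((hg _ (sq_nonneg _)).comp_hasFDerivAt y
      (hasStrictFDerivAt_norm_sq y).hasFDerivAt).fderiv
  have hD2 : HasFDerivAt (fun y : E => g' (‖y‖ ^ 2) • (2 • innerSL ℝ y))
      (g' (‖x‖ ^ 2) • (2 • innerSL ℝ) + (g'' • 2 • innerSL ℝ x).smulRight (2 • innerSL ℝ x)) x :=
    (hg'.comp_hasFDerivAt x (hasStrictFDerivAt_norm_sq x).hasFDerivAt).smul
      (2 • innerSL ℝ (E := E)).hasFDerivAt
  rw [iteratedFDeriv_two_apply, hD, hD2.fderiv]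
  simp only [Matrix.cons_val_zero, Matrix.cons_val_one, Matrix.cons_val_fin_one, add_apply,
    smul_apply, ContinuousLinearMap.smulRight_apply, coe_innerSL_apply, nsmul_eq_mul,
    Nat.cast_ofNat, smul_eq_mul]
  rw [innerSL_apply_apply]
  ring

theorem lap_comp_norm_sq {N : ℕ} (hg : ∀ s, 0 ≤ s → HasDerivAt g (g' s) s)
    (x : EuclideanSpace ℝ (Fin N)) (hg' : HasDerivAt g' g'' (‖x‖ ^ 2)) :
    lap (fun z => g (‖z‖ ^ 2)) x = 2 * N * g' (‖x‖ ^ 2) + 4 * ‖x‖ ^ 2 * g'' := by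
  simp only [lap, iteratedFDeriv_two_comp_norm_sq hg x hg', EuclideanSpace.inner_single_right,
    PiLp.single_eq_same, ringHom_apply, ← sq, one_pow, mul_one, one_mul, mul_assoc,
    Finset.sum_add_distrib, Finset.sum_const, Finset.card_univ, Fintype.card_fin, nsmul_eq_mul,
    ← Finset.mul_sum, ← EuclideanSpace.real_norm_sq_eq]
  ring

end Radial

noncomputable def logSqrt (A s : ℝ) : ℝ := log √(A + s)

noncomputable def profile (A γ τ s : ℝ) : ℝ := √(A + s) ^ (-γ) * logSqrt A s ^ τ

noncomputable def profileDeriv (A γ τ s : ℝ) : ℝ :=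
  profile A γ τ s * ((τ / logSqrt A s - γ) / (2 * (A + s)))

noncomputable def profileDeriv2 (A γ τ s : ℝ) : ℝ :=
  profile A γ τ s * (((τ / logSqrt A s - γ) ^ 2 - 2 * (τ / logSqrt A s - γ)
    - τ / logSqrt A s ^ 2) / (4 * (A + s) ^ 2))

section Profile

variable {A s : ℝ} (γ τ : ℝ)

theorem logSqrt_pos (h : 1 < A + s) : 0 < logSqrt A s :=
  log_pos (by rw [lt_sqrt zero_le_one]; simpa)

theorem hasDerivAt_sqrt_add (h : 0 < A + s) :
    HasDerivAt (fun t => √(A + t)) (1 / (2 * √(A + s))) s :=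
  ((hasDerivAt_id s).const_add A).sqrt h.ne'

theorem hasDerivAt_logSqrt (h : 0 < A + s) :
    HasDerivAt (logSqrt A) (1 / (2 * (A + s))) s := by
  refine ((hasDerivAt_sqrt_add h).log (sqrt_pos.2 h).ne').congr_deriv ?_
  rw [div_div, mul_assoc, mul_self_sqrt h.le]

theorem hasDerivAt_profile (h : 1 < A + s) :
    HasDerivAt (profile A γ τ) (profileDeriv A γ τ s) s := by
  have hu : 0 < A + s := by linarith
  have hb := (sqrt_pos.2 hu).ne'
  have hL := (logSqrt_pos h).ne'
  refine (((hasDerivAt_sqrt_add hu).rpow_const (p := -γ) (Or.inl hb)).mul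
    ((hasDerivAt_logSqrt hu).rpow_const (p := τ) (Or.inl hL))).congr_deriv ?_
  rw [profileDeriv, profile, rpow_sub_one hb, rpow_sub_one hL]
  set b := √(A + s)
  rw [show A + s = b * b from (mul_self_sqrt hu.le).symm]
  field_simp
  ring

theorem hasDerivAt_profileDeriv (h : 1 < A + s) :
    HasDerivAt (profileDeriv A γ τ) (profileDeriv2 A γ τ s) s := by
  have hu : 0 < A + s := by linarith
  have hL := (logSqrt_pos h).ne'
  have hd : HasDerivAt (fun t => 2 * (A + t)) 2 s := by
    simpa using ((hasDerivAt_id s).const_add A).const_mul 2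
  have hk := (((hasDerivAt_const s τ).fun_div (hasDerivAt_logSqrt hu) hL).sub_const γ).fun_div hd
    (by positivity)
  refine ((hasDerivAt_profile γ τ h).mul hk).congr_deriv ?_
  rw [profileDeriv2, profileDeriv]
  field_simp
  ring

theorem profile_pos (h : 1 < A + s) : 0 < profile A γ τ s :=
  mul_pos (rpow_pos_of_pos (sqrt_pos.2 (by linarith)) _) (rpow_pos_of_pos (logSqrt_pos h) _)

theorem half_le_logSqrt (h : exp 1 ≤ A + s) : 1 / 2 ≤ logSqrt A s := by
  have hu : 0 < A + s := (exp_pos 1).trans_le h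
  have := (le_log_iff_exp_le hu).2 h
  rw [logSqrt, log_sqrt hu.le]
  linarith

theorem abs_div_logSqrt_le (h : exp 1 ≤ A + s) : |τ / logSqrt A s| ≤ 2 * |τ| := by
  have hL := half_le_logSqrt h
  rw [abs_div, abs_of_pos (show 0 < logSqrt A s by linarith), div_le_iff₀ (by linarith)]
  nlinarith [abs_nonneg τ]

theorem abs_div_logSqrt_sq_le (h : exp 1 ≤ A + s) : |τ / logSqrt A s ^ 2| ≤ 4 * |τ| := by
  have hL := half_le_logSqrt h
  have hL2 : 1 / 4 ≤ logSqrt A s ^ 2 := by nlinarith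
  rw [abs_div, abs_of_pos (show 0 < logSqrt A s ^ 2 by linarith), div_le_iff₀ (by linarith)]
  nlinarith [abs_nonneg τ]

theorem abs_div_logSqrt_sub_le (h : exp 1 ≤ A + s) :
    |τ / logSqrt A s - γ| ≤ 2 * |τ| + |γ| :=
  (abs_sub _ _).trans (by gcongr; exact abs_div_logSqrt_le τ h)

theorem abs_profileDeriv_le (hA : exp 1 ≤ A) (hs : 0 ≤ s) :
    |profileDeriv A γ τ s| ≤ (2 * |τ| + |γ|) / 2 * profile A γ τ s := by
  have hu : exp 1 ≤ A + s := by linarith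
  have hu1 : 1 < A + s := by linarith [add_one_le_exp 1]
  have hm := abs_div_logSqrt_sub_le γ τ hu
  have hg : 0 < profile A γ τ s := profile_pos γ τ hu1
  rw [profileDeriv, abs_mul, abs_of_pos hg, abs_div, abs_of_pos (by positivity : 0 < 2 * (A + s)),
    mul_comm]
  gcongr
  linarith

theorem abs_mul_profileDeriv2_le (hA : exp 1 ≤ A) (hs : 0 ≤ s) :
    |s * profileDeriv2 A γ τ s|
      ≤ ((2 * |τ| + |γ|) ^ 2 + 2 * (2 * |τ| + |γ|) + 4 * |τ|) / 4 * profile A γ τ s := by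
  have hu : exp 1 ≤ A + s := by linarith
  have hu1 : 1 < A + s := by linarith [add_one_le_exp 1]
  set m := τ / logSqrt A s - γ
  have hm := abs_div_logSqrt_sub_le γ τ hu
  have hP : |m ^ 2 - 2 * m - τ / logSqrt A s ^ 2|
      ≤ (2 * |τ| + |γ|) ^ 2 + 2 * (2 * |τ| + |γ|) + 4 * |τ| := by
    calc |m ^ 2 - 2 * m - τ / logSqrt A s ^ 2|
        ≤ |m| ^ 2 + 2 * |m| + |τ / logSqrt A s ^ 2| := by
          refine (abs_sub _ _).trans (by gcongr; exact (abs_sub _ _).trans (by simp [abs_mul]))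
      _ ≤ _ := by gcongr; exact abs_div_logSqrt_sq_le τ hu
  have hs' : s / (4 * (A + s) ^ 2) ≤ 1 / 4 := by
    rw [div_le_div_iff₀ (by positivity) (by norm_num)]
    nlinarith [mul_le_mul_of_nonneg_left hu1.le (by linarith : 0 ≤ A + s), exp_pos 1]
  have hg : 0 < profile A γ τ s := profile_pos γ τ hu1
  calc |s * profileDeriv2 A γ τ s|
      = s / (4 * (A + s) ^ 2) * |m ^ 2 - 2 * m - τ / logSqrt A s ^ 2| * profile A γ τ s := by
        rw [profileDeriv2, abs_mul, abs_mul, abs_div, abs_of_nonneg hs, abs_of_pos hg,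
          abs_of_pos (by positivity : 0 < 4 * (A + s) ^ 2)]
        ring
    _ ≤ 1 / 4 * ((2 * |τ| + |γ|) ^ 2 + 2 * (2 * |τ| + |γ|) + 4 * |τ|) * profile A γ τ s := by
        gcongr
    _ = _ := by ring

end Profile

theorem lap_profile_le {N : ℕ} {A : ℝ} (γ τ : ℝ) (hA : exp 1 ≤ A) (x : EuclideanSpace ℝ (Fin N)) :
    lap (fun z => profile A γ τ (‖z‖ ^ 2)) x
      ≤ (N * (2 * |τ| + |γ|) + ((2 * |τ| + |γ|) ^ 2 + 2 * (2 * |τ| + |γ|) + 4 * |τ|))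
        * profile A γ τ (‖x‖ ^ 2) := by
  have hu : ∀ s, 0 ≤ s → 1 < A + s := fun s hs => by linarith [add_one_le_exp 1]
  have hs : 0 ≤ ‖x‖ ^ 2 := sq_nonneg _
  rw [lap_comp_norm_sq (fun s hs => hasDerivAt_profile γ τ (hu s hs)) x
    (hasDerivAt_profileDeriv γ τ (hu _ hs))]
  have h1 := (abs_le.1 (abs_profileDeriv_le γ τ hA hs)).2
  have h2 := (abs_le.1 (abs_mul_profileDeriv2_le γ τ hA hs)).2
  have h1' := mul_le_mul_of_nonneg_left h1 (by positivity : (0 : ℝ) ≤ 2 * N)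
  linarith

theorem stmt15_general (N : ℕ) (A γ τ : ℝ) (hA : Real.exp 1 < A) :
    ∃ lam0 > 0, ∀ lam > lam0, ∀ x : EuclideanSpace ℝ (Fin N),
      0 ≤ -(lap (fun z => (Real.sqrt (A + ‖z‖ ^ 2)) ^ (-γ) *
            (Real.log (Real.sqrt (A + ‖z‖ ^ 2))) ^ τ) x) +
          (lam / 2) * ((Real.sqrt (A + ‖x‖ ^ 2)) ^ (-γ) *
            (Real.log (Real.sqrt (A + ‖x‖ ^ 2))) ^ τ) := by
  set K := N * (2 * |τ| + |γ|) + ((2 * |τ| + |γ|) ^ 2 + 2 * (2 * |τ| + |γ|) + 4 * |τ|)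
  refine ⟨2 * K + 1, by positivity, fun lam hlam x => ?_⟩
  have hlap := lap_profile_le γ τ hA.le x
  have hv : 0 < profile A γ τ (‖x‖ ^ 2) :=
    profile_pos γ τ (by linarith [add_one_le_exp 1, sq_nonneg ‖x‖])
  change 0 ≤ -lap (fun z => profile A γ τ (‖z‖ ^ 2)) x + lam / 2 * profile A γ τ (‖x‖ ^ 2)
  nlinarith

theorem stmt15 (N : ℕ) (hN : 3 ≤ N) (A γ τ : ℝ) (hA : Real.exp 1 < A)
    (hγ1 : 2 < γ) (hγ2 : γ ≤ N) (hτ1 : -1 < τ) (hτ2 : τ < 1) :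
    ∃ lam0 > 0, ∀ lam > lam0, ∀ x : EuclideanSpace ℝ (Fin N),
      0 ≤ -(lap (fun z => (Real.sqrt (A + ‖z‖ ^ 2)) ^ (-γ) *
            (Real.log (Real.sqrt (A + ‖z‖ ^ 2))) ^ τ) x) +
          (lam / 2) * ((Real.sqrt (A + ‖x‖ ^ 2)) ^ (-γ) *
            (Real.log (Real.sqrt (A + ‖x‖ ^ 2))) ^ τ) :=
  stmt15_general N A γ τ hA
end
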